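/- For the Matérn kernel κ(r) = σ² 2^{1−ν}/Γ(ν) (√(2ν) r)^ν K_ν(√(2ν) r) with ν ≥ 1/2 and λ ≤ 1, there exists a constant C (depending only on d) such that the tail integral ∫_{L}^∞ r^{d−1} |κ(r)| dr ≤ C σ² 5^ν ν^{d/2−1} exp(−√(ν/2)·L) whenever L/√(ν/2) ≥ 10. -/

import Mathlib

open MeasureTheory

/-- The modified Bessel function of the second kind, via its integral representation
K_ν(x) = ∫₀^∞ e^{-x cosh t} cosh(νt) dt. -/
noncomputable def besselK (ν x : ℝ) : ℝ :=
  ∫ t in Set.Ioi (0 : ℝ), Real.exp (-x * Real.cosh t) * Real.cosh (ν * t)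

/-- The Matérn covariance kernel κ(r) = σ² 2^{1-ν}/Γ(ν) (√(2ν) r)^ν K_ν(√(2ν) r). -/
noncomputable def matern (σ2 ν r : ℝ) : ℝ :=
  σ2 * (2 : ℝ) ^ (1 - ν) / Real.Gamma ν *
    (Real.sqrt (2 * ν) * r) ^ ν * besselK ν (Real.sqrt (2 * ν) * r)

/-!
For `x ≥ ν + 1` the bounds `cosh (ν t) ≤ exp (ν cosh t)` and `cosh t ≥ 1 + t² / 2` in the integral
representation give `K_ν(x) ≤ 2 e^{ν - x}`. On the tail, `x = √(2ν) r ≥ 10 ν` lies where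
`x ↦ x^ν e^{-x/4}` is decreasing, so this factor is at most its value at `10 ν`; with the crude
Stirling bound `ν^ν ≤ e^{ν+1} Γ(ν + 1)` this gives `κ(r) ≤ 4e σ² 5^ν ν e^{-ν/2} e^{-3x/4}`.
Since `√(ν/2) ≥ 1/2`, `e^{-3x/4} ≤ e^{-√(ν/2) L} e^{-r/4}` for `r > L`, and `∫ r^{d-1} e^{-r/4}`
is a Gamma integral. Finally `ν e^{-ν/2} ≤ 8 · 2^{d/2} ν^{d/2-1}` because `ν² e^{-ν/2} ≤ 8` and
`(2ν)^{d/2} ≥ 1`.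
-/

open Real Set MeasureTheory Nat

lemma Real.one_add_sq_div_two_le_cosh (t : ℝ) : 1 + t ^ 2 / 2 ≤ cosh t := by
  have h := sum_le_hasSum (Finset.range 2)
    (fun n _ => div_nonneg (by rw [pow_mul]; positivity) (by positivity)) (hasSum_cosh t)
  simpa [Finset.sum_range_succ, Nat.factorial] using h

lemma Real.self_le_cosh (t : ℝ) : t ≤ cosh t := by
  nlinarith [one_add_sq_div_two_le_cosh t, sq_nonneg (t - 1)]

lemma Real.cosh_le_exp_of_nonneg {t : ℝ} (ht : 0 ≤ t) : cosh t ≤ exp t := by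
  rw [cosh_eq]
  linarith [exp_le_exp.2 (neg_le_self ht)]

lemma besselK_nonneg (ν x : ℝ) : 0 ≤ besselK ν x :=
  integral_nonneg fun _ => mul_nonneg (exp_nonneg _) (cosh_pos _).le

lemma besselK_le_two_mul_exp {ν x : ℝ} (hν : 0 ≤ ν) (hx : ν + 1 ≤ x) :
    besselK ν x ≤ 2 * exp (ν - x) := by
  have hpt : ∀ t ∈ Ioi (0 : ℝ),
      exp (-x * cosh t) * cosh (ν * t) ≤ exp (ν - x) * exp (-(1 / 2) * t ^ 2) := by
    intro t ht
    have hνt : cosh (ν * t) ≤ exp (ν * cosh t) :=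
      (cosh_le_exp_of_nonneg (mul_nonneg hν (le_of_lt ht))).trans
        (exp_le_exp.2 (mul_le_mul_of_nonneg_left (self_le_cosh t) hν))
    calc exp (-x * cosh t) * cosh (ν * t) ≤ exp (-x * cosh t) * exp (ν * cosh t) := by gcongr
      _ = exp ((ν - x) * cosh t) := by rw [← exp_add]; ring_nf
      _ ≤ exp (ν - x) * exp (-(1 / 2) * t ^ 2) := by
        rw [← exp_add, exp_le_exp]
        nlinarith [one_add_sq_div_two_le_cosh t, sq_nonneg t]
  calc besselK ν x
      ≤ ∫ t in Ioi (0 : ℝ), exp (ν - x) * exp (-(1 / 2) * t ^ 2) :=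
        setIntegral_mono_of_nonneg (fun _ _ => mul_nonneg (exp_nonneg _) (cosh_pos _).le) hpt
          ((integrable_exp_neg_mul_sq (by norm_num)).const_mul _).integrableOn
    _ = exp (ν - x) * (√(π / (1 / 2)) / 2) := by
        rw [integral_const_mul, integral_gaussian_Ioi]
    _ ≤ 2 * exp (ν - x) := by
        have : √(π / (1 / 2)) ≤ 4 := by
          rw [sqrt_le_left (by norm_num)]; nlinarith [pi_le_four]
        nlinarith [exp_pos (ν - x)]

lemma Real.rpow_self_le_exp_mul_Gamma_add_one {ν : ℝ} (hν : 0 ≤ ν) :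
    ν ^ ν ≤ exp (ν + 1) * Gamma (ν + 1) := by
  have hint : IntegrableOn (fun t => exp (-t) * t ^ (ν + 1 - 1)) (Ioi 0) :=
    GammaIntegral_convergent (by linarith)
  have hsub : Ioc ν (ν + 1) ⊆ Ioi 0 := fun t ht => hν.trans_lt ht.1
  rw [← div_le_iff₀' (exp_pos _), div_eq_mul_inv, ← exp_neg, mul_comm (ν ^ ν),
    Gamma_eq_integral (by linarith)]
  calc exp (-(ν + 1)) * ν ^ ν = ∫ _ in Ioc ν (ν + 1), exp (-(ν + 1)) * ν ^ ν := by simp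
    _ ≤ ∫ t in Ioc ν (ν + 1), exp (-t) * t ^ (ν + 1 - 1) := by
        refine setIntegral_mono_on (integrableOn_const measure_Ioc_lt_top.ne)
          (hint.mono_set hsub) measurableSet_Ioc fun t ht => ?_
        rw [add_sub_cancel_right]
        gcongr
        · exact ht.2
        · exact ht.1.le
    _ ≤ ∫ t in Ioi 0, exp (-t) * t ^ (ν + 1 - 1) :=
        setIntegral_mono_set hint
          ((ae_restrict_iff' measurableSet_Ioi).2 (ae_of_all _ fun t ht => by
            have : (0 : ℝ) < t := ht; positivity))
          hsub.eventuallyLE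

lemma Real.rpow_self_div_Gamma_le {ν : ℝ} (hν : 0 < ν) : ν ^ ν / Gamma ν ≤ exp (ν + 1) * ν := by
  rw [div_le_iff₀ (Gamma_pos_of_pos hν), mul_assoc, ← Gamma_add_one hν.ne']
  exact rpow_self_le_exp_mul_Gamma_add_one hν.le

lemma Real.rpow_mul_exp_neg_mul_le {ν c x y : ℝ} (hν : 0 ≤ ν) (hy : 0 < y) (hνy : ν ≤ c * y)
    (hyx : y ≤ x) : x ^ ν * exp (-(c * x)) ≤ y ^ ν * exp (-(c * y)) := by
  have hx : 0 < x := hy.trans_le hyx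
  rw [rpow_def_of_pos hx, rpow_def_of_pos hy, ← exp_add, ← exp_add, exp_le_exp]
  have hlog : log x - log y ≤ x / y - 1 := by
    rw [← log_div hx.ne' hy.ne']; exact log_le_sub_one_of_pos (by positivity)
  have : ν * (x / y - 1) ≤ c * (x - y) := by
    rw [div_sub_one hy.ne', mul_div_assoc', div_le_iff₀ hy]
    nlinarith [sub_nonneg.2 hyx]
  nlinarith [mul_le_mul_of_nonneg_left hlog hν]

lemma Real.mul_exp_neg_half_le {ν s : ℝ} (hν : 1 / 2 ≤ ν) (hs : 0 ≤ s) :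
    ν * exp (-(ν / 2)) ≤ 8 * 2 ^ s * ν ^ (s - 1) := by
  have hν0 : 0 < ν := by linarith
  have hsq : ν ^ 2 * exp (-(ν / 2)) ≤ 8 := by
    have h := pow_div_factorial_le_exp (ν / 2) (by linarith) 2
    rw [← le_div_iff₀ (exp_pos _), div_eq_mul_inv, ← exp_neg, neg_neg]
    norm_num [Nat.factorial] at h
    linarith
  have hone : 1 ≤ 2 ^ s * ν ^ s := by
    rw [← mul_rpow (by norm_num) hν0.le]; exact one_le_rpow (by linarith) hs
  calc ν * exp (-(ν / 2)) = ν ^ 2 * exp (-(ν / 2)) * ν⁻¹ := by field_simp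
    _ ≤ 8 * (2 ^ s * ν ^ s) * ν⁻¹ :=
        mul_le_mul_of_nonneg_right (hsq.trans (by linarith)) (by positivity)
    _ = 8 * 2 ^ s * ν ^ (s - 1) := by rw [rpow_sub_one hν0.ne']; ring

lemma integrableOn_Ioi_pow_mul_exp_neg_mul (n : ℕ) {b : ℝ} (hb : 0 < b) :
    IntegrableOn (fun r : ℝ => r ^ n * exp (-(b * r))) (Ioi 0) :=
  (integrableOn_rpow_mul_exp_neg_mul_rpow (s := n) (by linarith [n.cast_nonneg (α := ℝ)])
    one_pos hb).congr_fun (fun r _ => by simp) measurableSet_Ioi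

lemma integral_Ioi_pow_mul_exp_neg_mul_le (n : ℕ) {L b : ℝ} (hL : 0 ≤ L) (hb : 0 < b) :
    ∫ r in Ioi L, r ^ n * exp (-(b * r)) ≤ n ! / b ^ (n + 1) := by
  have heq : EqOn (fun r : ℝ => r ^ ((n + 1 : ℕ) - 1 : ℝ) * exp (-(b * r)))
      (fun r => r ^ n * exp (-(b * r))) (Ioi 0) := fun r _ => by simp
  have hint := integrableOn_Ioi_pow_mul_exp_neg_mul n hb
  calc ∫ r in Ioi L, r ^ n * exp (-(b * r))
      ≤ ∫ r in Ioi 0, r ^ n * exp (-(b * r)) :=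
        setIntegral_mono_set hint
          ((ae_restrict_iff' measurableSet_Ioi).2 (ae_of_all _ fun r hr => by
            have : (0 : ℝ) < r := hr; positivity))
          (Ioi_subset_Ioi hL).eventuallyLE
    _ = n ! / b ^ (n + 1) := by
        rw [← setIntegral_congr_fun measurableSet_Ioi heq,
          integral_rpow_mul_exp_neg_mul_Ioi (by positivity) hb, rpow_natCast, Nat.cast_succ,
          Gamma_nat_eq_factorial, div_pow, one_pow]
        field_simp

lemma matern_nonneg {σ2 ν r : ℝ} (hσ : 0 ≤ σ2) (hν : 0 ≤ ν) (hr : 0 ≤ r) :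
    0 ≤ matern σ2 ν r := by
  unfold matern
  have := besselK_nonneg ν (√(2 * ν) * r)
  positivity

lemma matern_le_mul_exp_neg {σ2 ν r : ℝ} (hσ : 0 ≤ σ2) (hν : 1 / 2 ≤ ν)
    (hr : 10 * ν ≤ √(2 * ν) * r) :
    matern σ2 ν r ≤
      4 * exp 1 * σ2 * 5 ^ ν * (ν * exp (-(ν / 2))) * exp (-(3 / 4 * (√(2 * ν) * r))) := by
  have hν0 : 0 < ν := by linarith
  set x := √(2 * ν) * r
  have hΓ : 0 < Gamma ν := Gamma_pos_of_pos hν0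
  have hconst : 0 ≤ σ2 * 2 ^ (1 - ν) / Gamma ν * x ^ ν :=
    mul_nonneg (div_nonneg (by positivity) hΓ.le) (rpow_nonneg (by linarith) _)
  have hpow : x ^ ν * exp (-(1 / 4 * x)) ≤ (10 * ν) ^ ν * exp (-(1 / 4 * (10 * ν))) :=
    rpow_mul_exp_neg_mul_le hν0.le (by positivity) (by linarith) hr
  have hrpow : (2 : ℝ) ^ (1 - ν) * (10 * ν) ^ ν = 2 * 5 ^ ν * ν ^ ν := by
    rw [mul_rpow (by norm_num) hν0.le, show (10 : ℝ) = 2 * 5 by norm_num,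
      mul_rpow (by norm_num) (by norm_num), rpow_sub two_pos, rpow_one]
    field_simp
  have hexp₁ : exp (ν - x) = exp ν * exp (-(1 / 4 * x)) * exp (-(3 / 4 * x)) := by
    rw [← exp_add, ← exp_add]; ring_nf
  have hexp₂ : exp ν * exp (-(1 / 4 * (10 * ν))) * exp (ν + 1) = exp 1 * exp (-(ν / 2)) := by
    rw [← exp_add, ← exp_add, ← exp_add]; ring_nf
  calc matern σ2 ν r = σ2 * 2 ^ (1 - ν) / Gamma ν * x ^ ν * besselK ν x := rfl
    _ ≤ σ2 * 2 ^ (1 - ν) / Gamma ν * x ^ ν * (2 * exp (ν - x)) :=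
        mul_le_mul_of_nonneg_left (besselK_le_two_mul_exp hν0.le (by linarith)) hconst
    _ = 2 * σ2 * 2 ^ (1 - ν) * exp ν / Gamma ν * (x ^ ν * exp (-(1 / 4 * x))) *
          exp (-(3 / 4 * x)) := by rw [hexp₁]; ring
    _ ≤ 2 * σ2 * 2 ^ (1 - ν) * exp ν / Gamma ν * ((10 * ν) ^ ν * exp (-(1 / 4 * (10 * ν)))) *
          exp (-(3 / 4 * x)) := by gcongr
    _ = 4 * σ2 * 5 ^ ν * (ν ^ ν / Gamma ν) * (exp ν * exp (-(1 / 4 * (10 * ν)))) *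
          exp (-(3 / 4 * x)) := by
        linear_combination
          (2 * σ2 * exp ν / Gamma ν * exp (-(1 / 4 * (10 * ν))) * exp (-(3 / 4 * x))) * hrpow
    _ ≤ 4 * σ2 * 5 ^ ν * (exp (ν + 1) * ν) * (exp ν * exp (-(1 / 4 * (10 * ν)))) *
          exp (-(3 / 4 * x)) := by
        gcongr; exact rpow_self_div_Gamma_le hν0
    _ = 4 * exp 1 * σ2 * 5 ^ ν * (ν * exp (-(ν / 2))) * exp (-(3 / 4 * x)) := by
        linear_combination (4 * σ2 * 5 ^ ν * ν * exp (-(3 / 4 * x))) * hexp₂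

lemma abs_matern_le_of_lt {σ2 ν L r : ℝ} (hσ : 0 ≤ σ2) (hν : 1 / 2 ≤ ν)
    (hL : 10 * √(ν / 2) ≤ L) (hr : L < r) :
    |matern σ2 ν r| ≤ 4 * exp 1 * σ2 * 5 ^ ν * (ν * exp (-(ν / 2))) *
      exp (-(√(ν / 2) * L)) * exp (-(1 / 4 * r)) := by
  set a := √(ν / 2)
  have ha_sq : a ^ 2 = ν / 2 := sq_sqrt (by linarith)
  have ha : 1 / 2 ≤ a := (le_sqrt' (by norm_num)).2 (by linarith)
  have hsqrt : √(2 * ν) = 2 * a := by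
    rw [show 2 * ν = 2 ^ 2 * (ν / 2) by ring, sqrt_mul (by norm_num), sqrt_sq (by norm_num)]
  have hr0 : 0 ≤ r := by linarith
  have haL : a * L ≤ a * r := mul_le_mul_of_nonneg_left hr.le (by linarith)
  rw [abs_of_nonneg (matern_nonneg hσ (by linarith) hr0), mul_assoc _ (exp _), ← exp_add]
  refine (matern_le_mul_exp_neg hσ hν (by rw [hsqrt]; nlinarith)).trans ?_
  gcongr
  rw [hsqrt]
  nlinarith

theorem stmt17 (d : ℕ) :
    ∃ C : ℝ, 0 < C ∧ ∀ ν : ℝ, 1 / 2 ≤ ν → ∀ σ2 : ℝ, 0 < σ2 → ∀ L : ℝ,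
      10 * Real.sqrt (ν / 2) ≤ L →
      (∫ r in Set.Ioi L, r ^ (d - 1) * |matern σ2 ν r|)
        ≤ C * σ2 * (5 : ℝ) ^ ν * ν ^ ((d : ℝ) / 2 - 1) *
            Real.exp (-(Real.sqrt (ν / 2) * L)) := by
  refine ⟨32 * exp 1 * 2 ^ ((d : ℝ) / 2) * ((d - 1)! / (1 / 4) ^ (d - 1 + 1)), by positivity, ?_⟩
  intro ν hν σ2 hσ L hL
  have hL0 : 0 ≤ L := (by positivity : 0 ≤ 10 * √(ν / 2)).trans hL
  set K := 4 * exp 1 * σ2 * 5 ^ ν * (ν * exp (-(ν / 2))) * exp (-(√(ν / 2) * L))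
  have hK : 0 ≤ K := by positivity
  calc ∫ r in Ioi L, r ^ (d - 1) * |matern σ2 ν r|
      ≤ ∫ r in Ioi L, K * (r ^ (d - 1) * exp (-(1 / 4 * r))) :=
        setIntegral_mono_of_nonneg
          (fun r hr => mul_nonneg (pow_nonneg (hL0.trans hr.le) _) (abs_nonneg _))
          (fun r hr => by
            rw [mul_left_comm]
            exact mul_le_mul_of_nonneg_left (abs_matern_le_of_lt hσ.le hν hL hr)
              (pow_nonneg (hL0.trans hr.le) _))
          (((integrableOn_Ioi_pow_mul_exp_neg_mul (d - 1) (by norm_num)).mono_set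
            (Ioi_subset_Ioi hL0)).const_mul K)
    _ = K * ∫ r in Ioi L, r ^ (d - 1) * exp (-(1 / 4 * r)) := integral_const_mul _ _
    _ ≤ K * ((d - 1)! / (1 / 4) ^ (d - 1 + 1)) :=
        mul_le_mul_of_nonneg_left (integral_Ioi_pow_mul_exp_neg_mul_le _ hL0 (by norm_num)) hK
    _ ≤ 4 * exp 1 * σ2 * 5 ^ ν * (8 * 2 ^ ((d : ℝ) / 2) * ν ^ ((d : ℝ) / 2 - 1)) *
          exp (-(√(ν / 2) * L)) * ((d - 1)! / (1 / 4) ^ (d - 1 + 1)) := by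
        simp only [K]
        gcongr 4 * exp 1 * σ2 * 5 ^ ν * ?_ * _ * _
        exact mul_exp_neg_half_le (s := (d : ℝ) / 2) hν (by positivity)
    _ = _ := by ring
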